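/- arXiv:2508.00666 — 3 statements merged into one kernel-verified Lean document; each statement's English description precedes it below -/
import Mathlib

section
/- Let a < b be real numbers, let ψ : (a,b) → [-∞,+∞) be upper semicontinuous, let Ω = {x+iy ∈ ℂ : a < y < b, x > ψ(y)}, let h be a Koenigs map onto Ω, and set c_Ω := inf{c ∈ (-∞,0) : ∫_a^b e^{2cψ(y)} dy < ∞}. Suppose this set is nonempty, c_Ω ∈ (-∞,0), and ∫_a^b e^{2c_Ω ψ(y)} dy < ∞. Then for every λ ∈ ℂ with λ ≠ 0 one has D(e^{λh}) < ∞ if and only if c_Ω ≤ Re λ < 0; that is, the point spectrum on the Dirichlet space equals the half-open vertical strip {c_Ω ≤ Re λ < 0} together with {0}. (Theorem 1.1(d).) -/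
/-!
Since `(e^{λh})' = λ h' e^{λh}` and `|h'|²` is the Jacobian of `h`, the change of variables
`w = h(z)` gives `D(e^{λh}) = |λ|² ∫_Ω e^{2 Re(λw)} dA(w)`. On the strip `Im w` is bounded, so
`Re(λw) = Re λ · Re w - Im λ · Im w` may be replaced by `c · Re w` with `c = Re λ` without affecting
finiteness. Integrating first along the horizontal slices `{x > ψ(y)}` gives `+∞` when `c ≥ 0`
(the slices are nonempty half-lines), and `(-2c)⁻¹ ∫_a^b e^{2cψ(y)} dy` when `c < 0`. So for `c < 0`
finiteness means `c ∈ S`, and `S = [c_Ω, 0)` because `e^{2cψ} ≤ e^{2c_Ωψ} + 1` whenever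
`c_Ω ≤ c < 0`.
-/

open MeasureTheory Set Complex Metric
open scoped ENNReal NNReal

noncomputable section

/-- The Dirichlet integral `D(f) = ∫_𝔻 |f'(z)|² dA(z)` over the unit disk. -/
def dirichletIntegral (f : ℂ → ℂ) : ℝ≥0∞ :=
  ∫⁻ z in ball (0 : ℂ) 1, (‖deriv f z‖₊ : ℝ≥0∞) ^ 2

/-- `h` is a Koenigs map onto `Ω`: an injective holomorphic map on the unit disk with image `Ω`. -/
def IsKoenigsMap (h : ℂ → ℂ) (Ω : Set ℂ) : Prop :=
  DifferentiableOn ℂ h (ball 0 1) ∧ InjOn h (ball 0 1) ∧ h '' ball 0 1 = Ω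

theorem ENNReal.mul_lt_top_iff_of_right {a b : ℝ≥0∞} (hb₀ : b ≠ 0) (hb : b ≠ ∞) :
    a * b < ∞ ↔ a < ∞ := by
  simp [lt_top_iff_ne_top, ENNReal.mul_eq_top, hb₀, hb]

theorem setLIntegral_eq_top_of_one_le {α : Type*} [MeasurableSpace α] {μ : Measure α}
    {s t : Set α} {f : α → ℝ≥0∞} (htm : MeasurableSet t) (hts : t ⊆ s) (ht : μ t = ∞)
    (hf : ∀ x ∈ t, 1 ≤ f x) :
    ∫⁻ x in s, f x ∂μ = ∞ :=
  top_unique <| calc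
    ∞ = ∫⁻ _ in t, 1 ∂μ := by simp [ht]
    _ ≤ ∫⁻ x in t, f x ∂μ := setLIntegral_mono' htm hf
    _ ≤ ∫⁻ x in s, f x ∂μ := lintegral_mono_set hts

theorem EReal.exp_mul_le_exp_mul_add_one {c₀ c : ℝ} (hc₀ : c₀ ≤ c) (hc : c < 0) (t : EReal) :
    EReal.exp (c * t) ≤ EReal.exp (c₀ * t) + 1 := by
  induction t with
  | bot => simp [EReal.coe_mul_bot_of_neg hc, EReal.coe_mul_bot_of_neg (hc₀.trans_lt hc)]
  | coe r =>
    simp only [← EReal.coe_mul, EReal.exp_coe]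
    rcases le_or_gt r 0 with hr | hr
    · exact (ENNReal.ofReal_le_ofReal (Real.exp_le_exp.2 (by nlinarith))).trans le_self_add
    · exact (ENNReal.ofReal_le_one.2 (Real.exp_le_one_iff.2 (by nlinarith))).trans le_add_self
  | top => simp [EReal.coe_mul_top_of_neg hc]

section ExpIntegrability

variable {α : Type*} [MeasurableSpace α] {μ : Measure α}

theorem lintegral_ofReal_exp_lt_top_of_le_add {u v : α → ℝ} (K : ℝ)
    (huv : ∀ᵐ x ∂μ, u x ≤ v x + K) (hv : ∫⁻ x, ENNReal.ofReal (Real.exp (v x)) ∂μ < ∞) :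
    ∫⁻ x, ENNReal.ofReal (Real.exp (u x)) ∂μ < ∞ :=
  calc ∫⁻ x, ENNReal.ofReal (Real.exp (u x)) ∂μ
      ≤ ∫⁻ x, ENNReal.ofReal (Real.exp K) * ENNReal.ofReal (Real.exp (v x)) ∂μ := by
        refine lintegral_mono_ae (huv.mono fun x hx => ?_)
        rw [← ENNReal.ofReal_mul (Real.exp_pos _).le, ← Real.exp_add]
        exact ENNReal.ofReal_le_ofReal (Real.exp_le_exp.2 (by linarith))
    _ = ENNReal.ofReal (Real.exp K) * ∫⁻ x, ENNReal.ofReal (Real.exp (v x)) ∂μ :=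
        lintegral_const_mul' _ _ ENNReal.ofReal_ne_top
    _ < ∞ := ENNReal.mul_lt_top ENNReal.ofReal_lt_top hv

theorem lintegral_ofReal_exp_lt_top_iff_of_abs_sub_le {u v : α → ℝ} (K : ℝ)
    (huv : ∀ᵐ x ∂μ, |u x - v x| ≤ K) :
    ∫⁻ x, ENNReal.ofReal (Real.exp (u x)) ∂μ < ∞ ↔
      ∫⁻ x, ENNReal.ofReal (Real.exp (v x)) ∂μ < ∞ :=
  ⟨lintegral_ofReal_exp_lt_top_of_le_add K <| huv.mono fun _ h => by linarith [abs_le.1 h],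
    lintegral_ofReal_exp_lt_top_of_le_add K <| huv.mono fun _ h => by linarith [abs_le.1 h]⟩
theorem lintegral_exp_mul_lt_top_of_le [IsFiniteMeasure μ] {ψ : α → EReal} {c₀ c : ℝ}
    (hc₀ : c₀ ≤ c) (hc : c < 0) (h : ∫⁻ x, EReal.exp (c₀ * ψ x) ∂μ < ∞) :
    ∫⁻ x, EReal.exp (c * ψ x) ∂μ < ∞ :=
  calc ∫⁻ x, EReal.exp (c * ψ x) ∂μ
      ≤ ∫⁻ x, (EReal.exp (c₀ * ψ x) + 1) ∂μ :=
        lintegral_mono fun x => EReal.exp_mul_le_exp_mul_add_one hc₀ hc (ψ x)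
    _ = ∫⁻ x, EReal.exp (c₀ * ψ x) ∂μ + μ univ := by
        rw [lintegral_add_right _ measurable_const, lintegral_one]
    _ < ∞ := ENNReal.add_lt_top.2 ⟨h, measure_lt_top μ univ⟩

end ExpIntegrability

theorem setLIntegral_exp_mul_Ioi_of_neg {c : ℝ} (hc : c < 0) (r : ℝ) :
    ∫⁻ x in Ioi r, ENNReal.ofReal (Real.exp (c * x))
      = ENNReal.ofReal (Real.exp (c * r)) * ENNReal.ofReal (-c)⁻¹ := by
  rw [← ofReal_integral_eq_lintegral_ofReal (integrableOn_exp_mul_Ioi hc r)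
    (ae_of_all _ fun _ => (Real.exp_pos _).le), integral_exp_mul_Ioi hc,
    ← ENNReal.ofReal_mul (Real.exp_pos _).le, neg_div, div_eq_mul_inv, ← mul_neg, ← inv_neg]

theorem setLIntegral_exp_mul_coe_gt_of_neg {c : ℝ} (hc : c < 0) (t : EReal) :
    ∫⁻ x in {x : ℝ | t < x}, ENNReal.ofReal (Real.exp (c * x))
      = EReal.exp (c * t) * ENNReal.ofReal (-c)⁻¹ := by
  induction t with
  | bot =>
    rw [EReal.coe_mul_bot_of_neg hc, EReal.exp_top, ENNReal.top_mul (by simpa using hc)]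
    refine setLIntegral_eq_top_of_one_le (t := Iic 0) measurableSet_Iic
      (fun x _ => EReal.bot_lt_coe x) (by simp) fun x hx => ?_
    simpa using Real.one_le_exp (mul_nonneg_of_nonpos_of_nonpos hc.le hx)
  | coe r =>
    simp only [EReal.coe_lt_coe_iff, ← EReal.coe_mul, EReal.exp_coe]
    exact setLIntegral_exp_mul_Ioi_of_neg hc r
  | top => simp [EReal.coe_mul_top_of_neg hc]

theorem setLIntegral_exp_mul_coe_gt_of_nonneg {c : ℝ} (hc : 0 ≤ c) {t : EReal} (ht : t < ⊤) :
    ∫⁻ x in {x : ℝ | t < x}, ENNReal.ofReal (Real.exp (c * x)) = ∞ := by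
  obtain ⟨r, htr, -⟩ := EReal.exists_between_coe_real ht
  refine setLIntegral_eq_top_of_one_le (t := Ioi (max r 0)) measurableSet_Ioi (fun x hx => ?_)
    (by simp) fun x hx => ?_
  · exact htr.trans (EReal.coe_lt_coe_iff.2 (le_max_left r 0 |>.trans_lt hx))
  · simpa using Real.one_le_exp (mul_nonneg hc ((le_max_right r 0).trans hx.out.le))

theorem Complex.det_smul_one (d : ℂ) : (d • (1 : ℂ →L[ℝ] ℂ)).det = Complex.normSq d := by
  have : ((d • (1 : ℂ →L[ℝ] ℂ) : ℂ →L[ℝ] ℂ) : ℂ →ₗ[ℝ] ℂ) = Algebra.lmul ℝ ℂ d := by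
    ext; simp
  rw [ContinuousLinearMap.det, this, ← Algebra.norm_apply, Algebra.norm_complex_apply]

theorem lintegral_image_eq_lintegral_nnnorm_deriv_sq_mul {s : Set ℂ} (hs : IsOpen s) {f : ℂ → ℂ}
    (hf : DifferentiableOn ℂ f s) (hinj : InjOn f s) (g : ℂ → ℝ≥0∞) :
    ∫⁻ w in f '' s, g w = ∫⁻ z in s, (‖deriv f z‖₊ : ℝ≥0∞) ^ 2 * g (f z) := by
  have hf' (z) (hz : z ∈ s) : HasFDerivWithinAt f (deriv f z • (1 : ℂ →L[ℝ] ℂ)) s z :=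
    (hf.differentiableAt (hs.mem_nhds hz)).hasDerivAt.complexToReal_fderiv.hasFDerivWithinAt
  rw [lintegral_image_eq_lintegral_abs_det_fderiv_mul volume hs.measurableSet hf' hinj]
  refine setLIntegral_congr_fun hs.measurableSet fun z _ => ?_
  rw [Complex.det_smul_one, abs_of_nonneg (Complex.normSq_nonneg _), Complex.normSq_eq_norm_sq,
    ENNReal.ofReal_pow (norm_nonneg _), ofReal_norm, enorm_eq_nnnorm]

namespace IsKoenigsMap

variable {h : ℂ → ℂ} {Ω : Set ℂ}

theorem measurableSet (hK : IsKoenigsMap h Ω) : MeasurableSet Ω :=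
  hK.2.2 ▸ measurableSet_ball.image_of_continuousOn_injOn hK.1.continuousOn hK.2.1

theorem dirichletIntegral_comp (hK : IsKoenigsMap h Ω) {g : ℂ → ℂ} (hg : Differentiable ℂ g) :
    dirichletIntegral (g ∘ h) = ∫⁻ w in Ω, (‖deriv g w‖₊ : ℝ≥0∞) ^ 2 := by
  obtain ⟨hdiff, hinj, rfl⟩ := hK
  rw [lintegral_image_eq_lintegral_nnnorm_deriv_sq_mul isOpen_ball hdiff hinj, dirichletIntegral]
  refine setLIntegral_congr_fun measurableSet_ball fun z hz => ?_
  rw [deriv_comp z (hg _) (hdiff.differentiableAt (isOpen_ball.mem_nhds hz)), nnnorm_mul,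
    ENNReal.coe_mul, mul_pow, mul_comm]

theorem dirichletIntegral_exp_mul (hK : IsKoenigsMap h Ω) (lam : ℂ) :
    dirichletIntegral (fun z => Complex.exp (lam * h z))
      = (‖lam‖₊ : ℝ≥0∞) ^ 2 * ∫⁻ w in Ω, ENNReal.ofReal (Real.exp (2 * (lam * w).re)) := by
  have hderiv (w : ℂ) : deriv (fun w => Complex.exp (lam * w)) w = lam * Complex.exp (lam * w) := by
    simpa [mul_comm] using ((hasDerivAt_id w).const_mul lam).cexp.deriv
  rw [← lintegral_const_mul' _ _ (by simp)]
  refine (hK.dirichletIntegral_comp (g := fun w => Complex.exp (lam * w)) (by fun_prop)).trans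
    (lintegral_congr fun w => ?_)
  rw [hderiv, nnnorm_mul, ENNReal.coe_mul, mul_pow, ← enorm_eq_nnnorm (Complex.exp _),
    ← ofReal_norm, Complex.norm_exp, ← ENNReal.ofReal_pow (Real.exp_pos _).le,
    ← Real.exp_nat_mul, Nat.cast_ofNat]

theorem dirichletIntegral_exp_mul_lt_top_iff (hK : IsKoenigsMap h Ω) {lam : ℂ} (hlam : lam ≠ 0) :
    dirichletIntegral (fun z => Complex.exp (lam * h z)) < ∞ ↔
      ∫⁻ w in Ω, ENNReal.ofReal (Real.exp (2 * (lam * w).re)) < ∞ := by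
  rw [hK.dirichletIntegral_exp_mul, mul_comm,
    ENNReal.mul_lt_top_iff_of_right (by simpa using hlam) (by simp)]

end IsKoenigsMap

section Supergraph

variable {I : Set ℝ} {ψ : ℝ → EReal}

theorem setLIntegral_re_supergraph (hI : MeasurableSet I)
    (hΩ : MeasurableSet {w : ℂ | w.im ∈ I ∧ ψ w.im < w.re}) {f : ℝ → ℝ≥0∞} (hf : Measurable f) :
    ∫⁻ w in {w : ℂ | w.im ∈ I ∧ ψ w.im < w.re}, f w.re
      = ∫⁻ y in I, ∫⁻ x in {x : ℝ | ψ y < x}, f x := by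
  set Ω := {w : ℂ | w.im ∈ I ∧ ψ w.im < w.re}
  have hslice (y : ℝ) : ∫⁻ x, Ω.indicator (fun w => f w.re) ⟨x, y⟩
      = I.indicator (fun y => ∫⁻ x in {x : ℝ | ψ y < x}, f x) y := by
    by_cases hy : y ∈ I
    · have hmeas : MeasurableSet {x : ℝ | ψ y < x} := measurable_coe_real_ereal measurableSet_Ioi
      rw [indicator_of_mem hy, ← lintegral_indicator hmeas]
      congr 1 with x
      simp [Ω, indicator, hy]
    · simp [Ω, indicator, hy]
  rw [← lintegral_indicator hΩ, ← lintegral_indicator hI,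
    ← Complex.volume_preserving_equiv_real_prod.symm.lintegral_comp_emb
      (MeasurableEquiv.measurableEmbedding _), Measure.volume_eq_prod,
    lintegral_prod_symm (fun p => Ω.indicator (fun w => f w.re) (measurableEquivRealProd.symm p))
      (((hf.comp Complex.measurable_re).indicator hΩ).comp
      Complex.measurableEquivRealProd.symm.measurable).aemeasurable]
  exact lintegral_congr hslice

theorem setLIntegral_supergraph_exp_mul_re_of_neg (hI : MeasurableSet I)
    (hΩ : MeasurableSet {w : ℂ | w.im ∈ I ∧ ψ w.im < w.re}) {c : ℝ} (hc : c < 0) :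
    ∫⁻ w in {w : ℂ | w.im ∈ I ∧ ψ w.im < w.re}, ENNReal.ofReal (Real.exp (c * w.re))
      = (∫⁻ y in I, EReal.exp (c * ψ y)) * ENNReal.ofReal (-c)⁻¹ := by
  rw [setLIntegral_re_supergraph hI hΩ (f := fun x => ENNReal.ofReal (Real.exp (c * x)))
    (by fun_prop), ← lintegral_mul_const' _ _ ENNReal.ofReal_ne_top]
  simp_rw [setLIntegral_exp_mul_coe_gt_of_neg hc]

theorem setLIntegral_supergraph_exp_mul_re_of_nonneg (hI : MeasurableSet I) (hI₀ : volume I ≠ 0)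
    (hψ : ∀ y ∈ I, ψ y < ⊤) (hΩ : MeasurableSet {w : ℂ | w.im ∈ I ∧ ψ w.im < w.re}) {c : ℝ}
    (hc : 0 ≤ c) :
    ∫⁻ w in {w : ℂ | w.im ∈ I ∧ ψ w.im < w.re}, ENNReal.ofReal (Real.exp (c * w.re)) = ∞ := by
  rw [setLIntegral_re_supergraph hI hΩ (f := fun x => ENNReal.ofReal (Real.exp (c * x)))
    (by fun_prop), setLIntegral_congr_fun hI fun y hy =>
      setLIntegral_exp_mul_coe_gt_of_nonneg hc (hψ y hy), setLIntegral_const, ENNReal.top_mul hI₀]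

end Supergraph

theorem abs_two_mul_re_mul_sub_le_of_im_mem_Ioo {a b : ℝ} {w : ℂ} (hw : w.im ∈ Ioo a b)
    (lam : ℂ) : |2 * (lam * w).re - 2 * lam.re * w.re| ≤ 2 * (|lam.im| * (|a| + |b|)) := by
  have him : |w.im| ≤ |a| + |b| := abs_le.2
    ⟨by linarith [neg_abs_le a, abs_nonneg b, hw.1],
      by linarith [le_abs_self b, abs_nonneg a, hw.2]⟩
  calc |2 * (lam * w).re - 2 * lam.re * w.re| = 2 * (|lam.im| * |w.im|) := by
        rw [Complex.mul_re, ← abs_mul, ← abs_two, ← abs_mul, ← abs_neg]; congr 1; ring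
    _ ≤ 2 * (|lam.im| * (|a| + |b|)) := by gcongr

theorem dirichlet_spectrum_hyperbolic_halfopen_strip_general
    (a b : ℝ) (hab : a < b) (ψ : ℝ → EReal)
    (hψ_lt_top : ∀ y ∈ Ioo a b, ψ y < ⊤)
    (Ω : Set ℂ)
    (hΩ : Ω = {w : ℂ | w.im ∈ Ioo a b ∧ ψ w.im < (w.re : EReal)})
    (h : ℂ → ℂ) (hKoenigs : IsKoenigsMap h Ω)
    (S : Set ℝ)
    (hS : S = {c : ℝ | c < 0 ∧
      ∫⁻ y in Ioo a b, EReal.exp (((2 * c : ℝ) : EReal) * ψ y) < ⊤})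
    (hSbdd : BddBelow S)
    (hcΩ_int : ∫⁻ y in Ioo a b, EReal.exp (((2 * sInf S : ℝ) : EReal) * ψ y) < ⊤)
    (lam : ℂ) (hlam : lam ≠ 0) :
    dirichletIntegral (fun z => Complex.exp (lam * h z)) < ⊤ ↔
      (sInf S ≤ lam.re ∧ lam.re < 0) := by
  have hΩm := hKoenigs.measurableSet
  have hbound (w) (hw : w ∈ Ω) := abs_two_mul_re_mul_sub_le_of_im_mem_Ioo (hΩ ▸ hw).1 lam
  rw [hKoenigs.dirichletIntegral_exp_mul_lt_top_iff hlam,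
    lintegral_ofReal_exp_lt_top_iff_of_abs_sub_le _ (ae_restrict_of_forall_mem hΩm hbound)]
  subst hΩ
  rcases lt_or_ge lam.re 0 with hneg | hnonneg
  · have h2neg : 2 * lam.re < 0 := by linarith
    rw [setLIntegral_supergraph_exp_mul_re_of_neg measurableSet_Ioo hΩm h2neg,
      ENNReal.mul_lt_top_iff_of_right (by simpa using hneg) ENNReal.ofReal_ne_top]
    refine ⟨fun hI => ⟨csInf_le hSbdd (hS ▸ ⟨hneg, hI⟩), hneg⟩, fun ⟨hle, _⟩ => ?_⟩
    exact lintegral_exp_mul_lt_top_of_le (by linarith) h2neg hcΩ_int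
  · rw [setLIntegral_supergraph_exp_mul_re_of_nonneg measurableSet_Ioo (by simpa using hab)
      hψ_lt_top hΩm (by linarith)]
    simp [hnonneg.not_gt]

/-- **Theorem 1.1(d).** With `c_Ω = inf{c < 0 : ∫_a^b e^{2cψ} dy < ∞}` finite and negative, if
`∫_a^b e^{2 c_Ω ψ(y)} dy < ∞` then the nonzero point spectrum on the Dirichlet space is the
half-open vertical strip `{c_Ω ≤ Re λ < 0}`. -/
theorem dirichlet_spectrum_hyperbolic_halfopen_strip
    (a b : ℝ) (hab : a < b) (ψ : ℝ → EReal)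
    (hψ_usc : UpperSemicontinuousOn ψ (Ioo a b))
    (hψ_lt_top : ∀ y ∈ Ioo a b, ψ y < ⊤)
    (Ω : Set ℂ)
    (hΩ : Ω = {w : ℂ | w.im ∈ Ioo a b ∧ ψ w.im < (w.re : EReal)})
    (h : ℂ → ℂ) (hKoenigs : IsKoenigsMap h Ω)
    (S : Set ℝ)
    (hS : S = {c : ℝ | c < 0 ∧
      ∫⁻ y in Ioo a b, EReal.exp (((2 * c : ℝ) : EReal) * ψ y) < ⊤})
    (hSne : S.Nonempty) (hSbdd : BddBelow S) (hcΩ_neg : sInf S < 0)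
    (hcΩ_int : ∫⁻ y in Ioo a b, EReal.exp (((2 * sInf S : ℝ) : EReal) * ψ y) < ⊤)
    (lam : ℂ) (hlam : lam ≠ 0) :
    dirichletIntegral (fun z => Complex.exp (lam * h z)) < ⊤ ↔
      (sInf S ≤ lam.re ∧ lam.re < 0) :=
  dirichlet_spectrum_hyperbolic_halfopen_strip_general a b hab ψ hψ_lt_top Ω hΩ h hKoenigs S hS
    hSbdd hcΩ_int lam hlam
end
end

section
/- Let Ω be a domain in ℂ that is convex in the positive direction and contained in a horizontal strip, and let h be a Koenigs map onto Ω. Suppose W(Ω) = ∫_{-∞}^0 ℓ_Ω(x) dx < ∞, that ℓ_Ω(x) > 0 for all x ≤ 0, that log ℓ_Ω(x)/(2x) → δ ∈ (0,+∞) as x → -∞, and that ∫_{-∞}^0 e^{-2δx} ℓ_Ω(x) dx < ∞. Then for every λ ∈ ℂ with λ ≠ 0 one has D(e^{λh}) < ∞ if and only if -δ ≤ Re λ < 0; that is, the point spectrum on the Dirichlet space equals {-δ ≤ Re λ < 0} ∪ {0}. (Theorem 1.2(c).) -/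
/-!
Changing variables `w = h(z)` turns `D(e^{λh})` into `∫_Ω |λ|² e^{2 Re(λw)} dA(w)`. On a
horizontal strip `Re(λw) = Re λ · Re w + O(1)`, so by Fubini finiteness is that of
`∫_ℝ e^{2 Re λ · x} ℓ_Ω(x) dx`. Since `ℓ_Ω` is bounded and nondecreasing, this diverges at `+∞`
unless `Re λ < 0`; at `-∞`, `ℓ_Ω(x) ≥ e^{-2 Re λ · x}` eventually when `Re λ < -δ`, so it diverges,
while for `Re λ ≥ -δ` it is dominated by `∫_{-∞}^0 e^{-2δx} ℓ_Ω(x) dx`.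
-/

open MeasureTheory Set Complex Metric
open scoped ENNReal NNReal

noncomputable section

/-- `Ω` is convex in the positive direction: `Ω + t ⊆ Ω` for all `t ≥ 0`. -/
def ConvexPosDir (Ω : Set ℂ) : Prop :=
  ∀ t : ℝ, 0 ≤ t → ∀ w ∈ Ω, w + (t : ℂ) ∈ Ω

/-- `ℓ_Ω(x)`: one-dimensional Lebesgue measure of the vertical slice `{y : x + iy ∈ Ω}`. -/
def sliceLen (Ω : Set ℂ) (x : ℝ) : ℝ≥0∞ :=
  volume {y : ℝ | (x : ℂ) + (y : ℂ) * Complex.I ∈ Ω}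

open Filter

theorem det_restrictScalars_toSpanSingleton (c : ℂ) :
    ((ContinuousLinearMap.toSpanSingleton ℂ c).restrictScalars ℝ).det = normSq c := by
  simp [ContinuousLinearMap.det, LinearMap.det_restrictScalars, Algebra.norm_complex_eq]

theorem dirichletIntegral_comp {F h : ℂ → ℂ} (hd : DifferentiableOn ℂ h (ball 0 1))
    (hinj : InjOn h (ball 0 1)) (hF : ∀ w ∈ h '' ball 0 1, DifferentiableAt ℂ F w) :
    dirichletIntegral (F ∘ h) = ∫⁻ w in h '' ball 0 1, (‖deriv F w‖₊ : ℝ≥0∞) ^ 2 := by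
  have hdz : ∀ z ∈ ball (0 : ℂ) 1, DifferentiableAt ℂ h z := fun z hz =>
    hd.differentiableAt (isOpen_ball.mem_nhds hz)
  rw [lintegral_image_eq_lintegral_abs_det_fderiv_mul volume measurableSet_ball
    (fun z hz => ((hdz z hz).hasDerivAt.hasFDerivAt.restrictScalars ℝ).hasFDerivWithinAt) hinj]
  refine setLIntegral_congr_fun measurableSet_ball fun z hz => ?_
  rw [deriv_comp z (hF _ (mem_image_of_mem h hz)) (hdz z hz), det_restrictScalars_toSpanSingleton,
    abs_of_nonneg (normSq_nonneg _), normSq_eq_norm_sq, nnnorm_mul, ENNReal.coe_mul, mul_pow,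
    ENNReal.ofReal_pow (norm_nonneg _), ofReal_norm, enorm_eq_nnnorm, mul_comm]

theorem enorm_deriv_exp_mul_sq (lam w : ℂ) :
    (‖deriv (fun w => exp (lam * w)) w‖₊ : ℝ≥0∞) ^ 2 =
      ENNReal.ofReal (‖lam‖ ^ 2 * Real.exp (2 * (lam * w).re)) := by
  rw [(((hasDerivAt_id' w).const_mul lam).cexp).deriv, ← enorm_eq_nnnorm, ← ofReal_norm,
    ← ENNReal.ofReal_pow (norm_nonneg _), norm_mul, norm_exp, mul_pow, ← Real.exp_nat_mul,
    mul_one, mul_comm]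
  norm_num

theorem lintegral_lt_top_iff_of_le_of_le {α : Type*} [MeasurableSpace α] {μ : Measure α}
    {f g : α → ℝ≥0∞} {c C : ℝ≥0∞} (hc : c ≠ 0) (hC : C ≠ ⊤)
    (hlow : ∀ᵐ x ∂μ, c * g x ≤ f x) (hup : ∀ᵐ x ∂μ, f x ≤ C * g x) :
    ∫⁻ x, f x ∂μ < ⊤ ↔ ∫⁻ x, g x ∂μ < ⊤ := by
  refine ⟨fun hf => ENNReal.lt_top_of_mul_ne_top_right ?_ hc, fun hg => ?_⟩
  · exact ((lintegral_const_mul_le c g).trans (lintegral_mono_ae hlow)).trans_lt hf |>.ne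
  · calc ∫⁻ x, f x ∂μ ≤ ∫⁻ x, C * g x ∂μ := lintegral_mono_ae hup
      _ = C * ∫⁻ x, g x ∂μ := lintegral_const_mul' C g hC
      _ < ⊤ := ENNReal.mul_lt_top hC.lt_top hg

theorem setLIntegral_comp_re_eq_lintegral_mul_sliceLen {Ω : Set ℂ} (hΩ : MeasurableSet Ω)
    {φ : ℝ → ℝ≥0∞} (hφ : Measurable φ) :
    ∫⁻ w in Ω, φ w.re = ∫⁻ x, φ x * sliceLen Ω x := by
  have hmeas : Measurable (Ω.indicator fun w => φ w.re) :=
    (hφ.comp measurable_re).indicator hΩ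
  rw [← lintegral_indicator hΩ,
    ← volume_preserving_equiv_real_prod.symm.lintegral_comp hmeas, Measure.volume_eq_prod,
    lintegral_prod _ (by exact (hmeas.comp measurableEquivRealProd.symm.measurable).aemeasurable)]
  refine lintegral_congr fun x => ?_
  have hslice : MeasurableSet {y : ℝ | (x : ℂ) + (y : ℂ) * I ∈ Ω} :=
    hΩ.preimage (by fun_prop)
  simp_rw [measurableEquivRealProd_symm_apply, mk_eq_add_mul_I]
  rw [sliceLen, ← lintegral_indicator_const hslice]
  congr 1 with y
  by_cases hy : (x : ℂ) + (y : ℂ) * I ∈ Ω <;> simp [hy]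

theorem setLIntegral_norm_sq_mul_exp_lt_top_iff {Ω : Set ℂ} (hΩ : MeasurableSet Ω) {M : ℝ}
    (hM : ∀ w ∈ Ω, |w.im| ≤ M) {lam : ℂ} (hlam : lam ≠ 0) :
    ∫⁻ w in Ω, ENNReal.ofReal (‖lam‖ ^ 2 * Real.exp (2 * (lam * w).re)) < ⊤ ↔
      ∫⁻ w in Ω, ENNReal.ofReal (Real.exp (2 * lam.re * w.re)) < ⊤ := by
  have hbound : ∀ w ∈ Ω, |2 * (lam * w).re - 2 * lam.re * w.re| ≤ 2 * |lam.im| * M := by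
    intro w hw
    rw [mul_re, show 2 * (lam.re * w.re - lam.im * w.im) - 2 * lam.re * w.re
      = -(2 * lam.im * w.im) by ring, abs_neg, abs_mul, abs_mul, abs_two, mul_assoc, mul_assoc]
    gcongr
    exact hM w hw
  refine lintegral_lt_top_iff_of_le_of_le
    (c := ENNReal.ofReal (‖lam‖ ^ 2 * Real.exp (-(2 * |lam.im| * M))))
    (C := ENNReal.ofReal (‖lam‖ ^ 2 * Real.exp (2 * |lam.im| * M)))
    (ENNReal.ofReal_pos.2 (by positivity)).ne' ENNReal.ofReal_ne_top ?_ ?_ <;>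
  filter_upwards [ae_restrict_mem hΩ] with w hw <;>
  rw [← ENNReal.ofReal_mul (by positivity), mul_assoc, ← Real.exp_add] <;>
  gcongr <;>
  linarith [abs_le.1 (hbound w hw)]

theorem sliceLen_le_of_subset_strip {Ω : Set ℂ} {a b : ℝ}
    (hab : Ω ⊆ {w : ℂ | a < w.im ∧ w.im < b}) (x : ℝ) :
    sliceLen Ω x ≤ ENNReal.ofReal (b - a) := by
  rw [sliceLen, ← Real.volume_Ioo]
  exact measure_mono fun y hy => by simpa using hab hy

theorem ConvexPosDir.monotone_sliceLen {Ω : Set ℂ} (hΩ : ConvexPosDir Ω) :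
    Monotone (sliceLen Ω) := by
  intro x x' hxx'
  refine measure_mono fun y (hy : (x : ℂ) + y * I ∈ Ω) => ?_
  have := hΩ (x' - x) (sub_nonneg.2 hxx') _ hy
  rwa [show (x : ℂ) + y * I + ((x' - x : ℝ) : ℂ) = x' + y * I by push_cast; ring] at this

theorem lintegral_eq_top_of_forall_le_on {α : Type*} [MeasurableSpace α] {μ : Measure α}
    {s : Set α} (hs : MeasurableSet s) (hμs : μ s = ⊤) {f : α → ℝ≥0∞} {c : ℝ≥0∞} (hc : c ≠ 0)
    (hf : ∀ x ∈ s, c ≤ f x) : ∫⁻ x, f x ∂μ = ⊤ :=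
  top_le_iff.1 <| calc
    ⊤ = ∫⁻ _ in s, c ∂μ := by rw [setLIntegral_const, hμs, ENNReal.mul_top hc]
    _ ≤ ∫⁻ x in s, f x ∂μ := setLIntegral_mono' hs hf
    _ ≤ ∫⁻ x, f x ∂μ := setLIntegral_le_lintegral s f

theorem eventually_exp_le_of_tendsto_log_div {f : ℝ → ℝ} {δ δ' : ℝ}
    (hlim : Tendsto (fun x => Real.log (f x) / (2 * x)) atBot (nhds δ))
    (hpos : ∀ᶠ x in atBot, 0 < f x) (hδ' : δ < δ') :
    ∀ᶠ x in atBot, Real.exp (2 * δ' * x) ≤ f x := by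
  filter_upwards [hlim.eventually_lt_const hδ', hpos, eventually_lt_atBot 0]
    with x hlog hfx hx
  rw [div_lt_iff_of_neg (by linarith)] at hlog
  calc Real.exp (2 * δ' * x) ≤ Real.exp (Real.log (f x)) := Real.exp_le_exp.2 (by linarith)
    _ = f x := Real.exp_log hfx

section ExpWeight

variable {ℓ : ℝ → ℝ≥0∞} {a δ : ℝ}

theorem lintegral_exp_mul_mul_eq_top_of_lt_neg (hfin : ∀ x, ℓ x ≠ ⊤)
    (hpos : ∀ x ≤ 0, 0 < ℓ x)
    (hlim : Tendsto (fun x => Real.log (ℓ x).toReal / (2 * x)) atBot (nhds δ)) (ha : a < -δ) :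
    ∫⁻ x, ENNReal.ofReal (Real.exp (2 * a * x)) * ℓ x = ⊤ := by
  have hpos_toReal : ∀ᶠ x in atBot, 0 < (ℓ x).toReal := by
    filter_upwards [eventually_le_atBot 0] with x hx
    exact ENNReal.toReal_pos (hpos x hx).ne' (hfin x)
  obtain ⟨M, hM⟩ := eventually_atBot.1 <|
    eventually_exp_le_of_tendsto_log_div hlim hpos_toReal (show δ < -a by linarith)
  refine lintegral_eq_top_of_forall_le_on measurableSet_Iic Real.volume_Iic one_ne_zero
    fun x (hx : x ≤ M) => ?_
  calc 1 = ENNReal.ofReal (Real.exp (2 * a * x)) * ENNReal.ofReal (Real.exp (2 * -a * x)) := by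
        rw [← ENNReal.ofReal_mul (Real.exp_pos _).le, ← Real.exp_add]; ring_nf; simp
    _ ≤ ENNReal.ofReal (Real.exp (2 * a * x)) * ℓ x := by
        gcongr
        exact ENNReal.ofReal_le_of_le_toReal (hM x hx)

theorem lintegral_exp_mul_mul_eq_top_of_nonneg (hmono : Monotone ℓ) (h0 : ℓ 0 ≠ 0)
    (ha : 0 ≤ a) : ∫⁻ x, ENNReal.ofReal (Real.exp (2 * a * x)) * ℓ x = ⊤ := by
  refine lintegral_eq_top_of_forall_le_on measurableSet_Ici Real.volume_Ici h0
    fun x (hx : 0 ≤ x) => ?_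
  calc ℓ 0 = 1 * ℓ 0 := (one_mul _).symm
    _ ≤ ENNReal.ofReal (Real.exp (2 * a * x)) * ℓ x := by
        gcongr
        · exact ENNReal.one_le_ofReal.2 (Real.one_le_exp (by positivity))
        · exact hmono hx

theorem lintegral_exp_mul_mul_lt_top {B : ℝ≥0∞} (hB : B ≠ ⊤) (hbdd : ∀ x, ℓ x ≤ B)
    (hint : ∫⁻ x in Iio 0, ENNReal.ofReal (Real.exp (-2 * δ * x)) * ℓ x < ⊤)
    (hδa : -δ ≤ a) (ha : a < 0) :
    ∫⁻ x, ENNReal.ofReal (Real.exp (2 * a * x)) * ℓ x < ⊤ := by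
  rw [← lintegral_add_compl _ measurableSet_Iio, compl_Iio]
  refine ENNReal.add_lt_top.2 ⟨lt_of_le_of_lt (setLIntegral_mono' measurableSet_Iio
    fun x (hx : x < 0) => ?_) hint, ?_⟩
  · gcongr ENNReal.ofReal (Real.exp ?_) * _
    nlinarith
  · calc ∫⁻ x in Ici 0, ENNReal.ofReal (Real.exp (2 * a * x)) * ℓ x
        ≤ ∫⁻ x in Ioi (-1), ENNReal.ofReal (Real.exp (2 * a * x)) * B := by
          refine (lintegral_mono fun x => ?_).trans (lintegral_mono_set (Ici_subset_Ioi.2 ?_))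
          · gcongr
            exact hbdd x
          · norm_num
      _ = (∫⁻ x in Ioi (-1), ENNReal.ofReal (Real.exp (2 * a * x))) * B :=
          lintegral_mul_const' _ _ hB
      _ < ⊤ := ENNReal.mul_lt_top
          (integrableOn_exp_mul_Ioi (by linarith) _).lintegral_lt_top hB.lt_top

theorem lintegral_exp_mul_mul_lt_top_iff {B : ℝ≥0∞} (hB : B ≠ ⊤) (hbdd : ∀ x, ℓ x ≤ B)
    (hmono : Monotone ℓ) (hpos : ∀ x ≤ 0, 0 < ℓ x)
    (hlim : Tendsto (fun x => Real.log (ℓ x).toReal / (2 * x)) atBot (nhds δ))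
    (hint : ∫⁻ x in Iio 0, ENNReal.ofReal (Real.exp (-2 * δ * x)) * ℓ x < ⊤) :
    ∫⁻ x, ENNReal.ofReal (Real.exp (2 * a * x)) * ℓ x < ⊤ ↔ -δ ≤ a ∧ a < 0 := by
  refine ⟨fun hfin => ⟨?_, ?_⟩, fun ⟨hδa, ha⟩ => lintegral_exp_mul_mul_lt_top hB hbdd hint hδa ha⟩
  · by_contra! ha
    exact hfin.ne (lintegral_exp_mul_mul_eq_top_of_lt_neg
      (fun x => ((hbdd x).trans_lt hB.lt_top).ne) hpos hlim ha)
  · by_contra! ha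
    exact hfin.ne (lintegral_exp_mul_mul_eq_top_of_nonneg hmono (hpos 0 le_rfl).ne' ha)

end ExpWeight

theorem dirichlet_spectrum_hyperbolic_delta_finite_closed_general
    (Ω : Set ℂ) (hopen : IsOpen Ω)
    (hconv : ConvexPosDir Ω)
    (hstrip : ∃ a b : ℝ, Ω ⊆ {w : ℂ | a < w.im ∧ w.im < b})
    (h : ℂ → ℂ) (hKoenigs : IsKoenigsMap h Ω)
    (hpos : ∀ x : ℝ, x ≤ 0 → 0 < sliceLen Ω x)
    (δ : ℝ)
    (hlim : Filter.Tendsto (fun x : ℝ => Real.log (sliceLen Ω x).toReal / (2 * x))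
      Filter.atBot (nhds δ))
    (hint : ∫⁻ x in Iio (0 : ℝ),
      ENNReal.ofReal (Real.exp (-2 * δ * x)) * sliceLen Ω x < ⊤)
    (lam : ℂ) (hlam : lam ≠ 0) :
    dirichletIntegral (fun z => Complex.exp (lam * h z)) < ⊤ ↔
      (-δ ≤ lam.re ∧ lam.re < 0) := by
  obtain ⟨hd, hinj, himg⟩ := hKoenigs
  obtain ⟨a, b, hab⟩ := hstrip
  have hD : dirichletIntegral (fun z => exp (lam * h z)) =
      ∫⁻ w in Ω, ENNReal.ofReal (‖lam‖ ^ 2 * Real.exp (2 * (lam * w).re)) := by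
    rw [← himg, ← Function.comp_def (fun w => exp (lam * w)) h,
      dirichletIntegral_comp hd hinj fun w _ => by fun_prop]
    simp_rw [enorm_deriv_exp_mul_sq]
  rw [hD, setLIntegral_norm_sq_mul_exp_lt_top_iff hopen.measurableSet
      (fun w hw => abs_le_max_abs_abs (hab hw).1.le (hab hw).2.le) hlam,
    setLIntegral_comp_re_eq_lintegral_mul_sliceLen hopen.measurableSet
      (φ := fun x => ENNReal.ofReal (Real.exp (2 * lam.re * x))) (by fun_prop)]
  exact lintegral_exp_mul_mul_lt_top_iff ENNReal.ofReal_ne_top (sliceLen_le_of_subset_strip hab)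
    hconv.monotone_sliceLen hpos hlim hint

/-- **Theorem 1.2(c).** If `W(Ω) < ∞`, `ℓ_Ω(x) > 0` for `x ≤ 0`,
`log ℓ_Ω(x)/(2x) → δ ∈ (0,∞)` as `x → -∞`, and `∫_{-∞}^0 e^{-2δx} ℓ_Ω(x) dx < ∞`, then the
point spectrum on the Dirichlet space is `{-δ ≤ Re λ < 0} ∪ {0}`. -/
theorem dirichlet_spectrum_hyperbolic_delta_finite_closed
    (Ω : Set ℂ) (hopen : IsOpen Ω) (hconn : IsConnected Ω)
    (hconv : ConvexPosDir Ω)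
    (hstrip : ∃ a b : ℝ, Ω ⊆ {w : ℂ | a < w.im ∧ w.im < b})
    (h : ℂ → ℂ) (hKoenigs : IsKoenigsMap h Ω)
    (hW : ∫⁻ x in Iio (0 : ℝ), sliceLen Ω x < ⊤)
    (hpos : ∀ x : ℝ, x ≤ 0 → 0 < sliceLen Ω x)
    (δ : ℝ) (hδpos : 0 < δ)
    (hlim : Filter.Tendsto (fun x : ℝ => Real.log (sliceLen Ω x).toReal / (2 * x))
      Filter.atBot (nhds δ))
    (hint : ∫⁻ x in Iio (0 : ℝ),
      ENNReal.ofReal (Real.exp (-2 * δ * x)) * sliceLen Ω x < ⊤)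
    (lam : ℂ) (hlam : lam ≠ 0) :
    dirichletIntegral (fun z => Complex.exp (lam * h z)) < ⊤ ↔
      (-δ ≤ lam.re ∧ lam.re < 0) :=
  dirichlet_spectrum_hyperbolic_delta_finite_closed_general Ω hopen hconv hstrip h hKoenigs hpos δ
    hlim hint lam hlam
end
end

section
/- Let Ω be a simply connected domain contained in the upper half-plane {Im w > 0}, convex in the positive direction and not contained in any horizontal strip, let h be a Koenigs map onto Ω, and suppose θ_Ω = Θ_Ω = θ for some θ ∈ (0,π). Then: (i) for every λ of the form λ = ρ e^{iφ} with ρ > 0 and φ ∈ (π/2, 3π/2 - θ) one has D(e^{λh}) < ∞; and (ii) if λ ≠ 0 and D(e^{λh}) < ∞, then λ = ρ e^{iφ} for some ρ > 0 and φ ∈ (π/2, 3π/2 - θ]. Equivalently, iS(0, π-θ) ∪ {0} ⊆ σ_D ⊆ iS(0, π-θ] ∪ {0}. (Theorem 1.3(b).) -/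
open MeasureTheory Set Complex Metric
open scoped ENNReal NNReal

noncomputable section

/-- The open angular sector `S(α,β) = {w ≠ 0 : α < arg w < β}` (principal argument). -/
def sector (a b : ℝ) : Set ℂ :=
  {w : ℂ | w ≠ 0 ∧ a < Complex.arg w ∧ Complex.arg w < b}

/-- The inner argument `θ_Ω` of a domain contained in the upper half-plane. -/
def innerArg (Ω : Set ℂ) : ℝ :=
  sSup ({0} ∪ {θ : ℝ | θ ∈ Ioc 0 Real.pi ∧ ∃ q : ℂ, (fun w => q + w) '' sector 0 θ ⊆ Ω})

/-- The outer argument `Θ_Ω` of a domain contained in the upper half-plane. -/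
def outerArg (Ω : Set ℂ) : ℝ :=
  sInf {θ : ℝ | θ ∈ Ioc 0 Real.pi ∧ ∃ q : ℂ, Ω ⊆ (fun w => q + w) '' sector 0 θ}

/-!
By conformal invariance, `D(e^{λh}) = ∫_Ω |λ e^{λw}|² dA(w) = |λ|² ∫_Ω e^{2 Re(λw)} dA(w)`.
If `Ω ⊆ q + S(0,b)` and `λ = ρe^{iφ}` with `π/2 < φ` and `φ + b < 3π/2`, then
`Re(λ(w - q)) ≤ -c|w - q|` on `Ω` for some `c > 0`, and the integral converges; outer sectors
with `b` arbitrarily close to `Θ_Ω = θ` give (i). Conversely, if `Re(λe^{iγ}) ≥ 0` for some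
`γ ∈ [0, θ_Ω)`, an inner sector `q + S(0,a) ⊆ Ω` with `a > γ` contains the rotated half-strip
`q + e^{iγ}{Re z > M, 0 < Im z < 1}`, which has infinite area and on which `Re(λw)` is bounded
below, so the integral diverges. Hence `D(e^{λh}) < ∞` forces `Re(λe^{iγ}) < 0` for all
`γ ∈ [0, θ)`, which pins `arg λ` modulo `2π` to `(π/2, 3π/2 - θ]`.
-/

open scoped Real

lemma det_restrictScalars_smulRight_one (c : ℂ) :
    ((ContinuousLinearMap.smulRight (1 : ℂ →L[ℂ] ℂ) c).restrictScalars ℝ).det = ‖c‖ ^ 2 := by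
  simp [ContinuousLinearMap.det, LinearMap.det_restrictScalars, Algebra.norm_complex_eq,
    Complex.normSq_eq_norm_sq]

theorem dirichletIntegral_comp_s7 {h : ℂ → ℂ} {Ω : Set ℂ} (hK : IsKoenigsMap h Ω) {F : ℂ → ℂ}
    (hF : ∀ w ∈ Ω, DifferentiableAt ℂ F w) :
    dirichletIntegral (F ∘ h) = ∫⁻ w in Ω, ‖deriv F w‖ₑ ^ 2 := by
  obtain ⟨hdiff, hinj, rfl⟩ := hK
  have hh : ∀ z ∈ ball (0 : ℂ) 1, DifferentiableAt ℂ h z := fun z hz =>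
    (hdiff z hz).differentiableAt (isOpen_ball.mem_nhds hz)
  have hder : ∀ z ∈ ball (0 : ℂ) 1, HasFDerivWithinAt h
      ((ContinuousLinearMap.smulRight (1 : ℂ →L[ℂ] ℂ) (deriv h z)).restrictScalars ℝ)
      (ball 0 1) z := fun z hz =>
    ((hh z hz).hasDerivAt.hasFDerivAt.restrictScalars ℝ).hasFDerivWithinAt
  rw [dirichletIntegral, lintegral_image_eq_lintegral_abs_det_fderiv_mul volume
    measurableSet_ball hder hinj]
  refine setLIntegral_congr_fun measurableSet_ball fun z hz => ?_
  rw [deriv_comp z (hF _ (mem_image_of_mem h hz)) (hh z hz), det_restrictScalars_smulRight_one,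
    abs_of_nonneg (sq_nonneg _), ENNReal.ofReal_pow (norm_nonneg _), ofReal_norm,
    ← enorm_eq_nnnorm, enorm_mul, mul_pow, mul_comm]

theorem dirichletIntegral_exp_mul {h : ℂ → ℂ} {Ω : Set ℂ} (hK : IsKoenigsMap h Ω) (lam : ℂ) :
    dirichletIntegral (fun z => Complex.exp (lam * h z))
      = ∫⁻ w in Ω, ‖lam * Complex.exp (lam * w)‖ₑ ^ 2 := by
  have hderiv : ∀ w, HasDerivAt (fun w => Complex.exp (lam * w)) (lam * Complex.exp (lam * w)) w :=
    fun w => by simpa [mul_comm] using ((hasDerivAt_id w).const_mul lam).cexp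
  rw [show (fun z => Complex.exp (lam * h z)) = (fun w => Complex.exp (lam * w)) ∘ h from rfl,
    dirichletIntegral_comp_s7 hK fun w _ => (hderiv w).differentiableAt]
  simp only [(hderiv _).deriv]

lemma integrable_exp_neg_mul_norm {b : ℝ} (hb : 0 < b) :
    Integrable fun w : ℂ => Real.exp (-b * ‖w‖) := by
  -- the Bochner integral of a non-integrable function is `0`, and this one is `π b⁻² Γ(3)`
  refine Integrable.of_integral_ne_zero ?_
  have h := Complex.integral_exp_neg_mul_rpow le_rfl hb
  simp only [Real.rpow_one] at h
  rw [h]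
  have := Real.Gamma_pos_of_pos (by norm_num : (0 : ℝ) < 2 / 1 + 1)
  positivity

lemma cos_add_le_max {φ b α : ℝ} (hφ : π / 2 < φ) (hα0 : 0 ≤ α) (hαb : α ≤ b)
    (hφb : φ + b < 3 * π / 2) :
    Real.cos (φ + α) ≤ max (Real.cos φ) (Real.cos (φ + b)) := by
  rcases le_total (φ + α) π with hle | hge
  · exact le_max_of_le_left <|
      Real.cos_le_cos_of_nonneg_of_le_pi (by linarith [Real.pi_pos]) hle (by linarith)
  · refine le_max_of_le_right ?_
    rw [← Real.cos_two_pi_sub (φ + α), ← Real.cos_two_pi_sub (φ + b)]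
    exact Real.cos_le_cos_of_nonneg_of_le_pi (by linarith) (by linarith) (by linarith)

lemma re_polar_mul_le_of_mem_sector {ρ φ b : ℝ} (hρ : 0 ≤ ρ) (hφ : π / 2 < φ)
    (hφb : φ + b < 3 * π / 2) {w : ℂ} (hw : w ∈ sector 0 b) :
    ((ρ : ℂ) * Complex.exp (φ * Complex.I) * w).re
      ≤ ρ * max (Real.cos φ) (Real.cos (φ + b)) * ‖w‖ := by
  obtain ⟨-, harg0, hargb⟩ := hw
  have hpolar : (ρ : ℂ) * Complex.exp (φ * Complex.I) * w
      = ((ρ * ‖w‖ : ℝ) : ℂ) * Complex.exp ((φ + Complex.arg w : ℝ) * Complex.I) := by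
    conv_lhs => rw [← Complex.norm_mul_exp_arg_mul_I w]
    push_cast
    rw [add_mul, Complex.exp_add]
    ring
  rw [hpolar, Complex.re_ofReal_mul, Complex.exp_ofReal_mul_I_re, mul_right_comm]
  gcongr
  exact cos_add_le_max hφ harg0.le hargb.le hφb

theorem setLIntegral_enorm_mul_exp_sq_lt_top {Ω : Set ℂ} {lam q : ℂ} {c : ℝ} (hc : 0 < c)
    (hre : ∀ w ∈ Ω, (lam * (w - q)).re ≤ -c * ‖w - q‖) :
    ∫⁻ w in Ω, ‖lam * Complex.exp (lam * w)‖ₑ ^ 2 < ⊤ := by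
  set K := ‖lam‖ ^ 2 * Real.exp (2 * (lam * q).re)
  have hbound : ∀ w ∈ Ω, ‖lam * Complex.exp (lam * w)‖ₑ ^ 2
      ≤ ENNReal.ofReal (K * Real.exp (-(2 * c) * ‖w - q‖)) := by
    intro w hw
    rw [← ofReal_norm, ← ENNReal.ofReal_pow (norm_nonneg _)]
    refine ENNReal.ofReal_le_ofReal ?_
    calc ‖lam * Complex.exp (lam * w)‖ ^ 2
        = K * Real.exp (2 * (lam * (w - q)).re) := by
          rw [norm_mul, Complex.norm_exp, mul_pow, ← Real.exp_nat_mul,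
            show lam * w = lam * q + lam * (w - q) by ring, Complex.add_re, Nat.cast_ofNat,
            mul_add, Real.exp_add, ← mul_assoc]
      _ ≤ K * Real.exp (-(2 * c) * ‖w - q‖) := by
          have := hre w hw
          exact mul_le_mul_of_nonneg_left (Real.exp_le_exp.2 (by linarith)) (by positivity)
  calc ∫⁻ w in Ω, ‖lam * Complex.exp (lam * w)‖ₑ ^ 2
      ≤ ∫⁻ w in Ω, ENNReal.ofReal (K * Real.exp (-(2 * c) * ‖w - q‖)) :=
        setLIntegral_mono (by fun_prop) hbound
    _ ≤ ∫⁻ w, ENNReal.ofReal (K * Real.exp (-(2 * c) * ‖w - q‖)) := setLIntegral_le_lintegral _ _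
    _ < ⊤ := (((integrable_exp_neg_mul_norm (by positivity)).comp_sub_right q).const_mul
        K).lintegral_lt_top

lemma re_mul_sub_le_of_subset_sector {Ω : Set ℂ} {q : ℂ} {ρ φ b : ℝ} (hρ : 0 < ρ)
    (hφ : π / 2 < φ) (hb : 0 ≤ b) (hφb : φ + b < 3 * π / 2)
    (hΩ : Ω ⊆ (fun w => q + w) '' sector 0 b) :
    ∃ c > 0, ∀ w ∈ Ω, ((ρ * Complex.exp (φ * Complex.I)) * (w - q)).re ≤ -c * ‖w - q‖ := by
  have hmax : max (Real.cos φ) (Real.cos (φ + b)) < 0 :=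
    max_lt (Real.cos_neg_of_pi_div_two_lt_of_lt hφ (by linarith))
      (Real.cos_neg_of_pi_div_two_lt_of_lt (by linarith) (by linarith))
  refine ⟨-(ρ * max (Real.cos φ) (Real.cos (φ + b))), by nlinarith, fun w hw => ?_⟩
  obtain ⟨v, hv, rfl⟩ := hΩ hw
  rw [neg_neg, add_sub_cancel_left]
  exact re_polar_mul_le_of_mem_sector hρ.le hφ hφb hv

def halfStrip (M : ℝ) : Set ℂ := Complex.re ⁻¹' Ioi M ∩ Complex.im ⁻¹' Ioo 0 1

lemma measurableSet_halfStrip (M : ℝ) : MeasurableSet (halfStrip M) :=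
  (measurableSet_Ioi.preimage Complex.measurable_re).inter
    (measurableSet_Ioo.preimage Complex.measurable_im)

lemma volume_halfStrip (M : ℝ) : volume (halfStrip M) = ⊤ := by
  have : halfStrip M = Complex.measurableEquivRealProd ⁻¹' (Ioi M ×ˢ Ioo 0 1) := by
    ext z
    simp [halfStrip, Complex.measurableEquivRealProd_apply]
  rw [this, Complex.volume_preserving_equiv_real_prod.measure_preimage
    (measurableSet_Ioi.prod measurableSet_Ioo).nullMeasurableSet, Measure.volume_eq_prod,
    Measure.prod_prod, Real.volume_Ioi, Real.volume_Ioo]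
  simp

lemma halfStrip_subset_sector {σ : ℝ} (hσ0 : 0 < σ) (hσ : σ ≤ π / 2) :
    halfStrip (1 / Real.sin σ) ⊆ sector 0 σ := by
  rintro z ⟨hre : 1 / Real.sin σ < z.re, him0, him1⟩
  have hsin : 0 < Real.sin σ := Real.sin_pos_of_pos_of_lt_pi hσ0 (by linarith [Real.pi_pos])
  have hre0 : 0 < z.re := lt_trans (by positivity) hre
  have hz : 0 < ‖z‖ := hre0.trans_le (Complex.re_le_norm z)
  have harg : Complex.arg z = Real.arcsin (z.im / ‖z‖) := Complex.arg_of_re_nonneg hre0.le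
  refine ⟨norm_pos_iff.mp hz, ?_, ?_⟩
  · rw [harg]
    exact Real.arcsin_pos.mpr (div_pos him0 hz)
  · rw [harg, Real.arcsin_lt_iff_lt_sin' ⟨by linarith, hσ⟩, div_lt_iff₀ hz]
    have : 1 < Real.sin σ * ‖z‖ := by
      calc 1 < Real.sin σ * z.re := (div_lt_iff₀' hsin).1 hre
        _ ≤ Real.sin σ * ‖z‖ := by gcongr; exact Complex.re_le_norm z
    linarith

lemma exp_mul_I_mul_mem_sector {γ σ a : ℝ} (hγ : 0 ≤ γ) (hγσ : γ + σ ≤ a) (ha : a ≤ π) {z : ℂ}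
    (hz : z ∈ sector 0 σ) : Complex.exp (γ * Complex.I) * z ∈ sector 0 a := by
  obtain ⟨hz0, harg0, hargσ⟩ := hz
  have hγarg : Complex.arg (Complex.exp (γ * Complex.I)) = γ := by
    rw [Complex.arg_exp_mul_I, toIocMod_eq_self]
    constructor <;> linarith [Real.pi_pos]
  have harg : Complex.arg (Complex.exp (γ * Complex.I) * z) = γ + Complex.arg z := by
    conv_rhs => rw [← hγarg]
    rw [Complex.arg_mul_eq_add_arg_iff (Complex.exp_ne_zero _) hz0, hγarg]
    constructor <;> linarith [Real.pi_pos]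
  exact ⟨mul_ne_zero (Complex.exp_ne_zero _) hz0, by rw [harg]; linarith,
    by rw [harg]; linarith⟩

lemma neg_norm_le_re_mul_of_mem_halfStrip {μ z : ℂ} {M : ℝ} (hμ : 0 ≤ μ.re) (hM : 0 ≤ M)
    (hz : z ∈ halfStrip M) : -‖μ‖ ≤ (μ * z).re := by
  obtain ⟨hre : M < z.re, him0, him1⟩ := hz
  have hreim : |μ.im| ≤ ‖μ‖ := Complex.abs_im_le_norm μ
  have : μ.im * z.im ≤ |μ.im| := by
    calc μ.im * z.im ≤ |μ.im| * z.im := by gcongr; exact le_abs_self _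
      _ ≤ |μ.im| := mul_le_of_le_one_right (abs_nonneg _) him1.le
  rw [Complex.mul_re]
  nlinarith [mul_nonneg hμ (hM.trans (le_of_lt hre))]

theorem setLIntegral_enorm_mul_exp_sq_eq_top {Ω : Set ℂ} {lam q : ℂ} {γ a : ℝ} (hlam : lam ≠ 0)
    (hγ : 0 ≤ γ) (hγa : γ < a) (ha : a ≤ π) (hre : 0 ≤ (lam * Complex.exp (γ * Complex.I)).re)
    (hΩ : (fun w => q + w) '' sector 0 a ⊆ Ω) :
    ∫⁻ w in Ω, ‖lam * Complex.exp (lam * w)‖ₑ ^ 2 = ⊤ := by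
  set σ := min (a - γ) (π / 2)
  have hσ0 : 0 < σ := lt_min (by linarith) (by positivity)
  have hsin : 0 ≤ Real.sin σ :=
    Real.sin_nonneg_of_nonneg_of_le_pi hσ0.le (by linarith [min_le_right (a - γ) (π / 2)])
  set S := halfStrip (1 / Real.sin σ)
  set T : ℂ → ℂ := fun z => q + rotation (Circle.exp γ) z
  have hT : ∀ z, T z = q + Complex.exp (γ * Complex.I) * z := fun z => by
    simp [T, rotation_apply, Circle.coe_exp]
  have hTmp : MeasurePreserving T :=
    (measurePreserving_add_left volume q).comp (rotation (Circle.exp γ)).measurePreserving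
  have hTemb : MeasurableEmbedding T :=
    ((rotation (Circle.exp γ)).toHomeomorph.trans (Homeomorph.addLeft q)).measurableEmbedding
  have hTS : T '' S ⊆ Ω := by
    rintro _ ⟨z, hz, rfl⟩
    rw [hT]
    exact hΩ ⟨_, exp_mul_I_mul_mem_sector hγ (by linarith [min_le_left (a - γ) (π / 2)]) ha
      (halfStrip_subset_sector hσ0 (min_le_right _ _) hz), rfl⟩
  set C := ‖lam * Complex.exp (lam * q - ‖lam‖)‖ₑ ^ 2
  have hC : C ≠ 0 := by simp [C, hlam, Complex.exp_ne_zero]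
  have hlow : ∀ z ∈ S, C ≤ ‖lam * Complex.exp (lam * T z)‖ₑ ^ 2 := by
    intro z hz
    have hre' := neg_norm_le_re_mul_of_mem_halfStrip hre (one_div_nonneg.2 hsin) hz
    rw [norm_mul, Complex.norm_exp_ofReal_mul_I, mul_one] at hre'
    simp only [C, hT, enorm_mul]
    gcongr
    rw [enorm_le_iff_norm_le, Complex.norm_exp, Complex.norm_exp, Real.exp_le_exp, mul_add,
      ← mul_assoc, Complex.add_re, Complex.sub_re, Complex.ofReal_re]
    linarith
  refine eq_top_iff.2 ?_
  calc ⊤ = ∫⁻ _ in S, C := by rw [setLIntegral_const, volume_halfStrip, ENNReal.mul_top hC]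
    _ ≤ ∫⁻ z in S, ‖lam * Complex.exp (lam * T z)‖ₑ ^ 2 :=
      setLIntegral_mono' (measurableSet_halfStrip _) hlow
    _ = ∫⁻ w in T '' S, ‖lam * Complex.exp (lam * w)‖ₑ ^ 2 :=
        hTmp.setLIntegral_comp_emb hTemb (fun w => ‖lam * Complex.exp (lam * w)‖ₑ ^ 2) S
    _ ≤ ∫⁻ w in Ω, ‖lam * Complex.exp (lam * w)‖ₑ ^ 2 := lintegral_mono_set hTS

lemma exists_sector_subset_of_lt_innerArg {Ω : Set ℂ} {γ : ℝ} (hγ : 0 ≤ γ)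
    (hlt : γ < innerArg Ω) :
    ∃ a q, γ < a ∧ a ≤ π ∧ (fun w => q + w) '' sector 0 a ⊆ Ω := by
  rw [innerArg] at hlt
  obtain ⟨x, hx, hγx⟩ := exists_lt_of_lt_csSup (insert_nonempty _ _) hlt
  rcases hx with rfl | ⟨⟨-, hxπ⟩, q, hq⟩
  · exact absurd hγx hγ.not_gt
  · exact ⟨x, q, hγx, hxπ, hq⟩

lemma exists_subset_sector_of_outerArg_lt {Ω : Set ℂ} {b : ℝ} (hpos : 0 < outerArg Ω)
    (hlt : outerArg Ω < b) :
    ∃ b' q, 0 < b' ∧ b' < b ∧ Ω ⊆ (fun w => q + w) '' sector 0 b' := by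
  have hne : {θ | θ ∈ Ioc 0 π ∧ ∃ q : ℂ, Ω ⊆ (fun w => q + w) '' sector 0 θ}.Nonempty :=
    Set.nonempty_iff_ne_empty.2 fun h => by rw [outerArg, h, Real.sInf_empty] at hpos; simp at hpos
  obtain ⟨b', ⟨⟨hb'0, -⟩, q, hq⟩, hb'⟩ := exists_lt_of_csInf_lt hne hlt
  exact ⟨b', q, hb'0, hb', hq⟩

lemma exists_polar_of_re_mul_exp_neg {lam : ℂ} (hlam : lam ≠ 0) {θ : ℝ} (hθ : 0 < θ)
    (hneg : ∀ γ : ℝ, 0 ≤ γ → γ < θ → (lam * Complex.exp (γ * Complex.I)).re < 0) :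
    ∃ ρ : ℝ, 0 < ρ ∧ ∃ φ : ℝ, π / 2 < φ ∧ φ ≤ 3 * π / 2 - θ ∧
      lam = (ρ : ℂ) * Complex.exp ((φ : ℂ) * Complex.I) := by
  set φ := toIocMod Real.two_pi_pos (π / 2) (Complex.arg lam)
  have hφ : φ ∈ Ioc (π / 2) (π / 2 + 2 * π) := toIocMod_mem_Ioc _ _ _
  have hrep : lam = ‖lam‖ * Complex.exp (φ * Complex.I) := by
    conv_lhs => rw [← Complex.norm_mul_exp_arg_mul_I lam,
      ← toIocMod_add_toIocDiv_zsmul Real.two_pi_pos (π / 2) (Complex.arg lam)]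
    push_cast
    rw [add_mul, Complex.exp_add, zsmul_eq_mul, mul_assoc (_ : ℂ) (2 * π) Complex.I,
      Complex.exp_int_mul_two_pi_mul_I, mul_one]
  have hcos : ∀ γ : ℝ, 0 ≤ γ → γ < θ → Real.cos (φ + γ) < 0 := fun γ h0 hθγ => by
    have h := hneg γ h0 hθγ
    rw [hrep, mul_assoc, ← Complex.exp_add, ← add_mul, ← Complex.ofReal_add,
      Complex.re_ofReal_mul, Complex.exp_ofReal_mul_I_re] at h
    exact neg_of_mul_neg_right h (norm_nonneg _)
  refine ⟨‖lam‖, norm_pos_iff.2 hlam, φ, hφ.1, ?_, hrep⟩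
  by_contra! hgt
  have hφ3 : φ ≤ 3 * π / 2 := by
    by_contra! h
    have hcos0 : 0 ≤ Real.cos φ := by
      rw [← Real.cos_sub_two_pi]
      exact Real.cos_nonneg_of_mem_Icc ⟨by linarith, by linarith [hφ.2]⟩
    linarith [add_zero φ ▸ hcos 0 le_rfl hθ]
  have h := hcos (3 * π / 2 - φ) (by linarith) (by linarith)
  rw [add_sub_cancel, show 3 * π / 2 = π / 2 + π by ring, Real.cos_add_pi,
    Real.cos_pi_div_two, neg_zero] at h
  exact h.false

theorem dirichlet_spectrum_phs_equal_args_general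
    (Ω : Set ℂ)
    (h : ℂ → ℂ) (hKoenigs : IsKoenigsMap h Ω)
    (θ : ℝ) (hθpos : 0 < θ)
    (hinner : innerArg Ω = θ) (houter : outerArg Ω = θ) :
    (∀ ρ : ℝ, 0 < ρ → ∀ φ : ℝ, Real.pi / 2 < φ → φ < 3 * Real.pi / 2 - θ →
      dirichletIntegral
        (fun z => Complex.exp (((ρ : ℂ) * Complex.exp ((φ : ℂ) * Complex.I)) * h z)) < ⊤) ∧
    (∀ lam : ℂ, lam ≠ 0 →
      dirichletIntegral (fun z => Complex.exp (lam * h z)) < ⊤ →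
      ∃ ρ : ℝ, 0 < ρ ∧ ∃ φ : ℝ, Real.pi / 2 < φ ∧ φ ≤ 3 * Real.pi / 2 - θ ∧
        lam = (ρ : ℂ) * Complex.exp ((φ : ℂ) * Complex.I)) := by
  refine ⟨fun ρ hρ φ hφ hφθ => ?_, fun lam hlam hfin => ?_⟩
  · obtain ⟨b, q, hb0, hbφ, hΩ⟩ :=
      exists_subset_sector_of_outerArg_lt (houter ▸ hθpos) (b := 3 * π / 2 - φ) (by linarith)
    obtain ⟨c, hc, hre⟩ := re_mul_sub_le_of_subset_sector hρ hφ hb0.le (by linarith) hΩ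
    rw [dirichletIntegral_exp_mul hKoenigs]
    exact setLIntegral_enorm_mul_exp_sq_lt_top hc hre
  · rw [dirichletIntegral_exp_mul hKoenigs] at hfin
    refine exists_polar_of_re_mul_exp_neg hlam hθpos fun γ hγ hγθ => ?_
    by_contra! hre
    obtain ⟨a, q, hγa, haπ, hΩ⟩ := exists_sector_subset_of_lt_innerArg hγ (hinner ▸ hγθ)
    exact hfin.ne (setLIntegral_enorm_mul_exp_sq_eq_top hlam hγ hγa haπ hre hΩ)

/-- **Theorem 1.3(b).** For a parabolic semigroup of positive hyperbolic step with Koenigs domain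
`Ω` in the upper half-plane and `θ_Ω = Θ_Ω = θ ∈ (0,π)`, one has
`iS(0, π-θ) ∪ {0} ⊆ σ_D ⊆ iS(0, π-θ] ∪ {0}`: every `λ = ρe^{iφ}` with `ρ > 0` and
`φ ∈ (π/2, 3π/2 - θ)` has `D(e^{λh}) < ∞`, and every nonzero `λ` with `D(e^{λh}) < ∞` is of the
form `ρe^{iφ}` with `ρ > 0` and `φ ∈ (π/2, 3π/2 - θ]`. -/
theorem dirichlet_spectrum_phs_equal_args
    (Ω : Set ℂ) (hopen : IsOpen Ω) (hsc : SimplyConnectedSpace ↥Ω)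
    (hupper : Ω ⊆ {w : ℂ | 0 < w.im})
    (hconv : ConvexPosDir Ω)
    (hnostrip : ∀ a b : ℝ, ¬ Ω ⊆ {w : ℂ | a < w.im ∧ w.im < b})
    (h : ℂ → ℂ) (hKoenigs : IsKoenigsMap h Ω)
    (θ : ℝ) (hθpos : 0 < θ) (hθpi : θ < Real.pi)
    (hinner : innerArg Ω = θ) (houter : outerArg Ω = θ) :
    (∀ ρ : ℝ, 0 < ρ → ∀ φ : ℝ, Real.pi / 2 < φ → φ < 3 * Real.pi / 2 - θ →
      dirichletIntegral
        (fun z => Complex.exp (((ρ : ℂ) * Complex.exp ((φ : ℂ) * Complex.I)) * h z)) < ⊤) ∧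
    (∀ lam : ℂ, lam ≠ 0 →
      dirichletIntegral (fun z => Complex.exp (lam * h z)) < ⊤ →
      ∃ ρ : ℝ, 0 < ρ ∧ ∃ φ : ℝ, Real.pi / 2 < φ ∧ φ ≤ 3 * Real.pi / 2 - θ ∧
        lam = (ρ : ℂ) * Complex.exp ((φ : ℂ) * Complex.I)) :=
  dirichlet_spectrum_phs_equal_args_general Ω h hKoenigs θ hθpos hinner houter
end
end
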